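/- arXiv:2211.03766 — 4 statements merged into one kernel-verified Lean document; each statement's English description precedes it below -/
import Mathlib

section
/- For all integers n ≥ k ≥ 0, the alternating sum ∑_{j=0}^{k} C(k,j) · (-1)^{k-j} / (n+1-j) equals 1 / (C(n,k) · (n+1)). -/
/-!
The sum is the `k`-th forward difference at `0` of `g_n j = 1 / (n + 1 - j)`. Since
`g_{n+1} (j + 1) = g_n j`, these differences satisfy the Pascal-type recurrence
`Δᵏ⁺¹ g_{n+1} 0 = Δᵏ g_n 0 - Δᵏ g_{n+1} 0`, and `1 / (C(n,k) (n + 1))` obeys the same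
recurrence, so induction on `k` gives the closed form.
-/

open Finset fwdDiff

theorem fwdDiff_iter_succ_apply {M G : Type*} [AddCommMonoid M] [AddCommGroup G] (h : M)
    (f : M → G) (n : ℕ) (y : M) :
    (Δ_[h])^[n + 1] f y = (Δ_[h])^[n] f (y + h) - (Δ_[h])^[n] f y := by
  rw [Function.iterate_succ_apply']
  rfl

theorem sum_choose_mul_neg_one_pow_mul_eq_fwdDiff_iter {R : Type*} [CommRing R] (f : ℕ → R)
    (k : ℕ) :
    ∑ j ∈ range (k + 1), (k.choose j : R) * (-1) ^ (k - j) * f j = (Δ_[1])^[k] f 0 := by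
  rw [fwdDiff_iter_eq_sum_shift]
  refine sum_congr rfl fun j _ => ?_
  simp [zsmul_eq_mul, mul_comm]

theorem one_div_choose_mul_sub (m k : ℕ) (hk : k ≤ m) :
    1 / ((m.choose k : ℝ) * (m + 1)) - 1 / (((m + 1).choose k : ℝ) * (m + 2)) =
      1 / (((m + 1).choose (k + 1) : ℝ) * (m + 2)) := by
  obtain ⟨a, rfl⟩ := Nat.exists_eq_add_of_le hk
  rw [Nat.cast_choose ℝ hk, Nat.cast_choose ℝ (by omega : k ≤ k + a + 1),
    Nat.cast_choose ℝ (by omega : k + 1 ≤ k + a + 1)]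
  simp only [show k + a + 1 - k = a + 1 by omega, show k + a + 1 - (k + 1) = a by omega,
    Nat.add_sub_cancel_left, Nat.factorial_succ]
  push_cast
  field_simp
  ring

theorem fwdDiff_iter_one_div_sub (n k : ℕ) (hk : k ≤ n) :
    (Δ_[1])^[k] (fun j : ℕ ↦ 1 / ((n : ℝ) + 1 - j)) 0 = 1 / ((n.choose k : ℝ) * (n + 1)) := by
  induction k generalizing n with
  | zero => simp
  | succ k ih =>
    obtain ⟨m, rfl⟩ := Nat.exists_eq_add_of_le' (show 1 ≤ n by omega)
    have shift : (fun j : ℕ ↦ 1 / (((m + 1 : ℕ) : ℝ) + 1 - ((j + 1 : ℕ) : ℝ))) =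
        fun j : ℕ ↦ 1 / ((m : ℝ) + 1 - j) := by
      funext j
      push_cast
      ring_nf
    have step := fwdDiff_iter_comp_add 1 (fun j : ℕ ↦ 1 / (((m + 1 : ℕ) : ℝ) + 1 - j)) 1 k 0
    beta_reduce at step
    rw [shift, zero_add] at step
    rw [fwdDiff_iter_succ_apply, zero_add, ← step, ih m (by omega), ih (m + 1) (by omega)]
    push_cast
    rw [show (m : ℝ) + 1 + 1 = m + 2 by ring]
    exact one_div_choose_mul_sub m k (by omega)

theorem alternating_sum_binomial (n k : ℕ) (h : k ≤ n) :
    ∑ j ∈ Finset.range (k + 1),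
      (k.choose j : ℝ) * (-1) ^ (k - j) / ((n : ℝ) + 1 - (j : ℝ)) =
    1 / ((n.choose k : ℝ) * ((n : ℝ) + 1)) := by
  rw [← fwdDiff_iter_one_div_sub n k h, ←
    sum_choose_mul_neg_one_pow_mul_eq_fwdDiff_iter (fun j ↦ 1 / ((n : ℝ) + 1 - j)) k]
  simp only [mul_one_div]
end

section
/- Let Λ be a full-rank lattice in an n-dimensional Euclidean vector space V, and let λ_ℤ(Λ) be the smallest λ such that Λ has a ℤ-basis all of whose vectors have norm ≤ λ. Let r > 0 and μ > 0 be real numbers with rμ ≥ n λ_ℤ(Λ), and let K ⊆ V be compact, convex, and symmetric with closed ball B̄_r(0) ⊆ K. Then #(K ∩ Λ) / #(μK ∩ Λ) ≤ μ^{−n} (1 + n(1 + μ^{−1}) r^{−1} λ_ℤ(Λ))^n. (This may be proved assuming the lattice-point bounds #(K∩Λ) ≤ (Vol K/det Λ)(1 + n λ_n(K,Λ)/2)^n and #(int(K)∩Λ) ≥ (Vol K/det Λ)(1 − n λ_n(K,Λ)/2)^n whenever λ_n(K,Λ) ≤ 2/n.) -/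
open MeasureTheory Pointwise

/-- The `j`-th successive minimum of a convex body `K` with respect to a lattice `Λ`
(given as a set) in Euclidean `n`-space. -/
noncomputable def succMinimum (n j : ℕ) (K Λ : Set (EuclideanSpace ℝ (Fin n))) : ℝ :=
  sInf {l : ℝ | 0 < l ∧
    j ≤ Module.finrank ℝ
      (Submodule.span ℝ ((l • K) ∩ Λ) : Submodule ℝ (EuclideanSpace ℝ (Fin n)))}

/-- `λ_ℤ(Λ)`: the smallest `l` such that the lattice `Λ` admits a `ℤ`-basis all of whose
vectors have norm at most `l`. -/
noncomputable def lambdaZ (n : ℕ) (Λ : Set (EuclideanSpace ℝ (Fin n))) : ℝ :=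
  sInf {l : ℝ | 0 < l ∧ ∃ v : Fin n → EuclideanSpace ℝ (Fin n),
    (∀ i, v i ∈ Λ ∧ ‖v i‖ ≤ l) ∧
    ((Submodule.span ℤ (Set.range v) : Submodule ℤ (EuclideanSpace ℝ (Fin n))) :
      Set (EuclideanSpace ℝ (Fin n))) = Λ}

/-!
Both counts are compared with `vol K / det Λ` through the assumed lattice-point bounds,
`#(K ∩ Λ) ≤ vol K / det Λ · (1 + n λ_n(K) / 2)^n` and
`#(μK ∩ Λ) ≥ μ^n vol K / det Λ · (1 - n λ_n(μK) / 2)^n`.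
A ℤ-basis of `Λ` of norms `≤ l` lies in `(l / ρ) • B̄_ρ`, so `B̄_ρ ⊆ K` gives `λ_n(K) ≤ λ_ℤ / ρ`;
hence `n λ_n(K) ≤ A := n λ_ℤ / r` and `n λ_n(μK) ≤ A / μ ≤ 1`.
The ratio is then at most `μ^{-n} ((1 + A/2) / (1 - A/(2μ)))^n`, and
`1 + A/2 ≤ (1 + A + A/μ)(1 - A/(2μ))` because the difference is `(A + A/μ)(1 - A/μ)/2`.
-/

open Metric

lemma closedBall_mul_subset_smul {E : Type*} [NormedAddCommGroup E] [NormedSpace ℝ E]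
    {K : Set E} {ρ c : ℝ} (hc : 0 < c) (h : closedBall (0 : E) ρ ⊆ K) :
    closedBall (0 : E) (ρ * c) ⊆ c • K :=
  calc closedBall (0 : E) (ρ * c) = c • closedBall 0 ρ := by
        rw [smul_closedBall' hc.ne', smul_zero, Real.norm_of_nonneg hc.le, mul_comm]
    _ ⊆ c • K := Set.smul_set_mono h

section Lattice

variable {n : ℕ} {K Λ : Set (EuclideanSpace ℝ (Fin n))}

lemma lambdaZ_nonneg (Λ : Set (EuclideanSpace ℝ (Fin n))) : 0 ≤ lambdaZ n Λ :=
  Real.sInf_nonneg fun _ hl => hl.1.le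

lemma succMinimum_nonneg (j : ℕ) (K Λ : Set (EuclideanSpace ℝ (Fin n))) :
    0 ≤ succMinimum n j K Λ :=
  Real.sInf_nonneg fun _ hl => hl.1.le

lemma succMinimum_le_of_closedBall_subset {v : Fin n → EuclideanSpace ℝ (Fin n)} {l ρ : ℝ}
    (hl : 0 < l) (hρ : 0 < ρ) (hv : ∀ i, v i ∈ Λ ∧ ‖v i‖ ≤ l)
    (hvΛ : (Submodule.span ℤ (Set.range v) : Set (EuclideanSpace ℝ (Fin n))) = Λ)
    (hΛ : Submodule.span ℝ Λ = ⊤) (hball : closedBall 0 ρ ⊆ K) :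
    succMinimum n n K Λ ≤ l / ρ := by
  refine csInf_le ⟨0, fun _ hx => hx.1.le⟩ ⟨div_pos hl hρ, ?_⟩
  have hv_mem : Set.range v ⊆ (l / ρ) • K ∩ Λ := by
    rintro _ ⟨i, rfl⟩
    refine ⟨closedBall_mul_subset_smul (div_pos hl hρ) hball ?_, (hv i).1⟩
    rw [mul_div_cancel₀ l hρ.ne', mem_closedBall_zero_iff]
    exact (hv i).2
  have hspan : Submodule.span ℝ ((l / ρ) • K ∩ Λ) = ⊤ := by
    refine eq_top_mono (Submodule.span_mono hv_mem) ?_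
    rw [← hΛ, ← hvΛ, Submodule.span_span_of_tower]
  rw [hspan, finrank_top, finrank_euclideanSpace_fin]

lemma succMinimum_le_lambdaZ_div (b : Module.Basis (Fin n) ℝ (EuclideanSpace ℝ (Fin n)))
    (hΛ : Λ = ((Submodule.span ℤ (Set.range ⇑b) :
      Submodule ℤ (EuclideanSpace ℝ (Fin n))) : Set (EuclideanSpace ℝ (Fin n))))
    {ρ : ℝ} (hρ : 0 < ρ) (hball : closedBall 0 ρ ⊆ K) :
    succMinimum n n K Λ ≤ lambdaZ n Λ / ρ := by
  have hb_short : ∀ i, b i ∈ Λ ∧ ‖b i‖ ≤ 1 + ∑ j, ‖b j‖ := fun i =>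
    ⟨hΛ ▸ Submodule.subset_span ⟨i, rfl⟩,
      (Finset.single_le_sum (fun j _ => norm_nonneg (b j)) (Finset.mem_univ i)).trans
        (le_add_of_nonneg_left zero_le_one)⟩
  rw [le_div_iff₀ hρ]
  refine le_csInf ⟨_, by positivity, b, hb_short, hΛ.symm⟩ fun l ⟨hl, v, hv, hvΛ⟩ => ?_
  exact (le_div_iff₀ hρ).1 <|
    succMinimum_le_of_closedBall_subset hl hρ hv hvΛ (hΛ ▸ ZSpan.span_top b) hball

lemma natCast_mul_succMinimum_le (b : Module.Basis (Fin n) ℝ (EuclideanSpace ℝ (Fin n)))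
    (hΛ : Λ = ((Submodule.span ℤ (Set.range ⇑b) :
      Submodule ℤ (EuclideanSpace ℝ (Fin n))) : Set (EuclideanSpace ℝ (Fin n))))
    {ρ : ℝ} (hρ : 0 < ρ) (hball : closedBall 0 ρ ⊆ K) :
    n * succMinimum n n K Λ ≤ n * lambdaZ n Λ / ρ := by
  rw [mul_div_assoc]
  gcongr
  exact succMinimum_le_lambdaZ_div b hΛ hρ hball

lemma toReal_volume_smul (μ : ℝ) (hμ : 0 ≤ μ) (K : Set (EuclideanSpace ℝ (Fin n))) :
    (volume (μ • K)).toReal = μ ^ n * (volume K).toReal := by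
  rw [Measure.addHaar_smul_of_nonneg volume hμ, finrank_euclideanSpace_fin, ENNReal.toReal_mul,
    ENNReal.toReal_ofReal (pow_nonneg hμ n)]

lemma card_inter_le_of_closedBall_subset
    (b : Module.Basis (Fin n) ℝ (EuclideanSpace ℝ (Fin n)))
    (hΛ : Λ = ((Submodule.span ℤ (Set.range ⇑b) :
      Submodule ℤ (EuclideanSpace ℝ (Fin n))) : Set (EuclideanSpace ℝ (Fin n))))
    {ρ c : ℝ} (hρ : 0 < ρ) (hc : 0 ≤ c) (hball : closedBall 0 ρ ⊆ K)
    (hcount : (Nat.card ↥(K ∩ Λ) : ℝ) ≤ c * (1 + n * succMinimum n n K Λ / 2) ^ n) :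
    (Nat.card ↥(K ∩ Λ) : ℝ) ≤ c * (1 + n * lambdaZ n Λ / ρ / 2) ^ n := by
  have hns := natCast_mul_succMinimum_le b hΛ hρ hball
  refine hcount.trans ?_
  have := succMinimum_nonneg n K Λ
  gcongr

lemma le_card_inter_of_closedBall_subset
    (b : Module.Basis (Fin n) ℝ (EuclideanSpace ℝ (Fin n)))
    (hΛ : Λ = ((Submodule.span ℤ (Set.range ⇑b) :
      Submodule ℤ (EuclideanSpace ℝ (Fin n))) : Set (EuclideanSpace ℝ (Fin n))))
    (hn : 0 < n) (hK : Bornology.IsBounded K) {ρ c : ℝ} (hρ : 0 < ρ) (hc : 0 ≤ c)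
    (hball : closedBall 0 ρ ⊆ K) (hLρ : n * lambdaZ n Λ ≤ ρ)
    (hcount : succMinimum n n K Λ ≤ 2 / n →
      c * (1 - n * succMinimum n n K Λ / 2) ^ n ≤ Nat.card ↥(interior K ∩ Λ)) :
    c * (1 - n * lambdaZ n Λ / ρ / 2) ^ n ≤ Nat.card ↥(K ∩ Λ) := by
  have hns := natCast_mul_succMinimum_le b hΛ hρ hball
  have hLρ' : n * lambdaZ n Λ / ρ ≤ 1 := (div_le_one hρ).2 hLρ
  calc c * (1 - n * lambdaZ n Λ / ρ / 2) ^ n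
      ≤ c * (1 - n * succMinimum n n K Λ / 2) ^ n := by
        gcongr
        · linarith
    _ ≤ Nat.card ↥(interior K ∩ Λ) :=
        hcount ((le_div_iff₀' (Nat.cast_pos.2 hn)).2 (by linarith))
    _ ≤ Nat.card ↥(K ∩ Λ) :=
        Nat.cast_le.2 (Nat.card_mono (hΛ ▸ ZSpan.setFinite_inter b hK)
          (Set.inter_subset_inter_left Λ interior_subset))

end Lattice

lemma one_add_half_le_mul {A B : ℝ} (hA : 0 ≤ A) (hB : 0 ≤ B) (hB1 : B ≤ 1) :
    1 + A / 2 ≤ (1 + A + B) * (1 - B / 2) := by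
  nlinarith [mul_nonneg (add_nonneg hA hB) (sub_nonneg.mpr hB1)]

lemma div_le_zpow_mul_pow_of_le_of_le {X Y c μ A : ℝ} (n : ℕ) (hc : 0 < c) (hμ : 0 < μ) (hA : 0 ≤ A)
    (hAμ : A ≤ μ) (hX : X ≤ c * (1 + A / 2) ^ n) (hY : μ ^ n * c * (1 - A / μ / 2) ^ n ≤ Y) :
    X / Y ≤ μ ^ (-(n : ℤ)) * (1 + (1 + μ⁻¹) * A) ^ n := by
  have hB : A / μ ≤ 1 := (div_le_one hμ).2 hAμ
  have hY_pos : 0 < μ ^ n * c * (1 - A / μ / 2) ^ n := by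
    have : 0 < 1 - A / μ / 2 := by linarith
    positivity
  rw [zpow_neg, zpow_natCast, div_le_iff₀ (hY_pos.trans_le hY)]
  calc X ≤ c * (1 + A / 2) ^ n := hX
    _ ≤ c * ((1 + A + A / μ) * (1 - A / μ / 2)) ^ n := by
        gcongr
        exact one_add_half_le_mul hA (div_nonneg hA hμ.le) hB
    _ = (μ ^ n)⁻¹ * (1 + (1 + μ⁻¹) * A) ^ n * (μ ^ n * c * (1 - A / μ / 2) ^ n) := by
        have hμn : (μ ^ n)⁻¹ * μ ^ n = 1 := inv_mul_cancel₀ (by positivity)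
        rw [mul_pow]
        linear_combination (-c * (1 + (1 + μ⁻¹) * A) ^ n * (1 - A / μ / 2) ^ n) * hμn
    _ ≤ (μ ^ n)⁻¹ * (1 + (1 + μ⁻¹) * A) ^ n * Y := by gcongr

theorem card_quotient_bound (n : ℕ) (hn : 0 < n)
    (b : Module.Basis (Fin n) ℝ (EuclideanSpace ℝ (Fin n)))
    (Λ : Set (EuclideanSpace ℝ (Fin n)))
    (hΛ : Λ = ((Submodule.span ℤ (Set.range ⇑b) :
      Submodule ℤ (EuclideanSpace ℝ (Fin n))) : Set (EuclideanSpace ℝ (Fin n))))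
    (FL_upper : ∀ K' : Set (EuclideanSpace ℝ (Fin n)), IsCompact K' → Convex ℝ K' →
      K' = -K' → 0 < volume K' →
      (Nat.card ↥(K' ∩ Λ) : ℝ) ≤
        (volume K').toReal / |((EuclideanSpace.basisFun (Fin n) ℝ).toBasis).det ⇑b| *
          (1 + n * succMinimum n n K' Λ / 2) ^ n)
    (FL_lower : ∀ K' : Set (EuclideanSpace ℝ (Fin n)), IsCompact K' → Convex ℝ K' →
      K' = -K' → 0 < volume K' → succMinimum n n K' Λ ≤ 2 / n →
      (volume K').toReal / |((EuclideanSpace.basisFun (Fin n) ℝ).toBasis).det ⇑b| *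
          (1 - n * succMinimum n n K' Λ / 2) ^ n ≤
        (Nat.card ↥(interior K' ∩ Λ) : ℝ))
    (r μ : ℝ) (hr : 0 < r) (hμ : 0 < μ) (hrμ : n * lambdaZ n Λ ≤ r * μ)
    (K : Set (EuclideanSpace ℝ (Fin n))) (hK : IsCompact K) (hKc : Convex ℝ K)
    (hKs : K = -K) (hball : Metric.closedBall (0 : EuclideanSpace ℝ (Fin n)) r ⊆ K) :
    (Nat.card ↥(K ∩ Λ) : ℝ) / (Nat.card ↥((μ • K) ∩ Λ) : ℝ) ≤
      μ ^ (-(n : ℤ)) * (1 + n * (1 + μ⁻¹) * r⁻¹ * lambdaZ n Λ) ^ n := by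
  have hA : 0 ≤ n * lambdaZ n Λ / r := by
    have := lambdaZ_nonneg Λ
    positivity
  have hAμ : n * lambdaZ n Λ / r ≤ μ := (div_le_iff₀ hr).2 (by linarith)
  have hballμ := closedBall_mul_subset_smul hμ hball
  have hvolK : 0 < volume K := (measure_closedBall_pos volume 0 hr).trans_le (measure_mono hball)
  have hvolμK : 0 < volume (μ • K) :=
    (measure_closedBall_pos volume 0 (mul_pos hr hμ)).trans_le (measure_mono hballμ)
  have hc : 0 < (volume K).toReal / |((EuclideanSpace.basisFun (Fin n) ℝ).toBasis).det ⇑b| :=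
    div_pos (ENNReal.toReal_pos hvolK.ne' hK.measure_lt_top.ne)
      (abs_pos.2 (Module.Basis.isUnit_det _ b).ne_zero)
  have hupper := card_inter_le_of_closedBall_subset b hΛ hr hc.le hball
    (FL_upper K hK hKc hKs hvolK)
  have hlower := le_card_inter_of_closedBall_subset b hΛ hn (hK.smul μ).isBounded
    (mul_pos hr hμ) (by positivity) hballμ hrμ
    (FL_lower _ (hK.smul μ) (hKc.smul μ) (by rw [← Set.smul_set_neg, ← hKs]) hvolμK)
  rw [toReal_volume_smul μ hμ.le, mul_div_assoc, ← div_div] at hlower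
  convert div_le_zpow_mul_pow_of_le_of_le n hc hμ hA hAμ hupper hlower using 3
  ring
end

section
/- Let K ⊆ ℝ^d be a compact, convex, symmetric set of positive volume, write points as x = (x₁, …, x_d), set H_t = {x ∈ K : x₁ = t}, and suppose K contains a point x with |x₁| = r' > 0. Then for every t ∈ ℝ, Vol_{d−1}(K ∩ H_t) / Vol(K) ≤ d / (2r'), where Vol_{d−1} is (d−1)-dimensional Lebesgue measure on the hyperplane {x₁ = t}. -/
/-!
Convexity makes `K` contain the cone over the slice at height `t` with apex any point `a ∈ K`;
by homogeneity of Haar measure the slice of this cone at height `u` has volume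
`(|u - a₁| / |t - a₁|)ⁿ` times that of the slice at `t`, so integrating over `u` between `t`
and `a₁` gives `Vol(K) ≥ |t - a₁| / (n + 1) · Vol_n(K_t)`. By symmetry `K` contains the points
`±x` at heights `±r'`; one cone (if `t` lies outside `[-r', r']`) or the two cones on either side
of `t` (if it lies inside) sweep a height interval of length at least `2r'`.
-/

open MeasureTheory Set
open scoped Interval

theorem add_abs_div_mul_sub_of_mem_uIoc {s t u : ℝ} (hu : u ∈ Ι t s) :
    s + |u - s| / |t - s| * (t - s) = u := by
  have ⟨hne, hnn⟩ : t - s ≠ 0 ∧ 0 ≤ (u - s) / (t - s) := by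
    rcases mem_uIoc.1 hu with ⟨h₁, h₂⟩ | ⟨h₁, h₂⟩
    · exact ⟨by linarith, div_nonneg_of_nonpos (by linarith) (by linarith)⟩
    · exact ⟨by linarith, div_nonneg (by linarith) (by linarith)⟩
  rw [← abs_div, abs_of_nonneg hnn, div_mul_cancel₀ _ hne]
  ring

theorem setLIntegral_uIoc_pow_abs_sub_div (n : ℕ) (s t : ℝ) :
    ∫⁻ u in Ι t s, ENNReal.ofReal (|u - s| ^ n / |t - s| ^ n) =
      ENNReal.ofReal (|t - s| / (n + 1)) := by
  have hint : ∫ u in Ι t s, |u - s| ^ n / |t - s| ^ n = |t - s| / (n + 1) := by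
    rw [integral_div, uIoc_comm, integral_pow_abs_sub_uIoc]
    rcases eq_or_ne (t - s) 0 with h | h
    · simp [h]
    · field_simp
      ring
  rw [← hint, ofReal_integral_eq_lintegral_ofReal]
  · exact (by fun_prop : Continuous fun u : ℝ => |u - s| ^ n / |t - s| ^ n).integrableOn_uIoc
  · exact Filter.Eventually.of_forall fun u => by positivity

theorem MeasureTheory.Measure.lintegral_measure_preimage_mk_le_prod {α β : Type*}
    [MeasurableSpace α] [MeasurableSpace β] (ν : Measure α) (μ : Measure β) [SFinite μ]
    (K : Set (α × β)) : ∫⁻ x, μ (Prod.mk x ⁻¹' K) ∂ν ≤ ν.prod μ K :=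
  calc ∫⁻ x, μ (Prod.mk x ⁻¹' K) ∂ν
      ≤ ∫⁻ x, μ (Prod.mk x ⁻¹' toMeasurable (ν.prod μ) K) ∂ν :=
        lintegral_mono fun _ => measure_mono (preimage_mono (subset_toMeasurable _ _))
    _ = ν.prod μ K := by
        rw [← Measure.prod_apply (measurableSet_toMeasurable _ _), measure_toMeasurable]

theorem ENNReal.toReal_div_toReal_le_inv_of_ofReal_mul_le {c : ℝ} (hc : 0 < c)
    {x V : ENNReal} (h : ENNReal.ofReal c * x ≤ V) : x.toReal / V.toReal ≤ c⁻¹ := by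
  rcases eq_or_ne V ⊤ with rfl | hV
  · simpa using hc.le
  have hx : x ≠ ⊤ := by
    rintro rfl
    exact hV (top_le_iff.1 (by simpa [hc] using h))
  have hle := ENNReal.toReal_mono hV h
  rw [ENNReal.toReal_mul, ENNReal.toReal_ofReal hc.le] at hle
  refine div_le_of_le_mul₀ ENNReal.toReal_nonneg (inv_nonneg.2 hc.le) ?_
  rwa [inv_mul_eq_div, le_div_iff₀' hc]

namespace Convex

variable {E : Type*} [NormedAddCommGroup E] [NormedSpace ℝ E] [MeasurableSpace E] [BorelSpace E]
  [FiniteDimensional ℝ E] (μ : Measure E) [μ.IsAddHaarMeasure] {K : Set (ℝ × E)}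

theorem ofReal_pow_mul_addHaar_slice_le (hK : Convex ℝ K) {a : ℝ × E} (ha : a ∈ K) (t : ℝ)
    {c : ℝ} (hc₀ : 0 ≤ c) (hc₁ : c ≤ 1) :
    ENNReal.ofReal (c ^ Module.finrank ℝ E) * μ (Prod.mk t ⁻¹' K) ≤
      μ (Prod.mk (a.1 + c * (t - a.1)) ⁻¹' K) := by
  rw [← abs_of_nonneg (pow_nonneg hc₀ _), ← Measure.addHaar_image_homothety μ a.2]
  refine measure_mono ?_
  rintro _ ⟨y, hy, rfl⟩
  have hmk : (a.1 + c * (t - a.1), AffineMap.homothety a.2 c y) =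
      AffineMap.lineMap a (t, y) c := by
    ext <;> simp [AffineMap.lineMap_apply, AffineMap.homothety_apply]; ring
  rw [mem_preimage, hmk]
  exact hK.lineMap_mem ha hy ⟨hc₀, hc₁⟩

theorem ofReal_mul_addHaar_slice_le_setLIntegral (hK : Convex ℝ K) {a : ℝ × E} (ha : a ∈ K)
    (t : ℝ) :
    ENNReal.ofReal (|t - a.1| / (Module.finrank ℝ E + 1)) * μ (Prod.mk t ⁻¹' K) ≤
      ∫⁻ u in Ι t a.1, μ (Prod.mk u ⁻¹' K) := by
  set n := Module.finrank ℝ E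
  have hcone : ∀ u ∈ Ι t a.1, ENNReal.ofReal (|u - a.1| ^ n / |t - a.1| ^ n) *
      μ (Prod.mk t ⁻¹' K) ≤ μ (Prod.mk u ⁻¹' K) := by
    intro u hu
    have hc₁ : |u - a.1| / |t - a.1| ≤ 1 :=
      div_le_one_of_le₀ (abs_sub_left_of_mem_uIcc (uIoc_subset_uIcc (uIoc_comm t _ ▸ hu)))
        (abs_nonneg _)
    have := hK.ofReal_pow_mul_addHaar_slice_le μ ha t (by positivity) hc₁
    rwa [add_abs_div_mul_sub_of_mem_uIoc hu, div_pow] at this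
  calc ENNReal.ofReal (|t - a.1| / (n + 1)) * μ (Prod.mk t ⁻¹' K)
      = ∫⁻ u in Ι t a.1, ENNReal.ofReal (|u - a.1| ^ n / |t - a.1| ^ n) *
          μ (Prod.mk t ⁻¹' K) := by
        rw [lintegral_mul_const _ (by fun_prop), setLIntegral_uIoc_pow_abs_sub_div]
    _ ≤ ∫⁻ u in Ι t a.1, μ (Prod.mk u ⁻¹' K) :=
        lintegral_mono_ae ((ae_restrict_iff' measurableSet_uIoc).2 (.of_forall hcone))

theorem ofReal_mul_addHaar_slice_le_lintegral (hK : Convex ℝ K) {a b : ℝ × E} (ha : a ∈ K)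
    (hb : b ∈ K) (t : ℝ) :
    ENNReal.ofReal (|b.1 - a.1| / (Module.finrank ℝ E + 1)) * μ (Prod.mk t ⁻¹' K) ≤
      ∫⁻ u, μ (Prod.mk u ⁻¹' K) := by
  wlog hab : a.1 ≤ b.1 generalizing a b
  · rw [abs_sub_comm]
    exact this hb ha (le_of_not_ge hab)
  set n := Module.finrank ℝ E
  have hcone : ∀ c ∈ K, |b.1 - a.1| ≤ |t - c.1| →
      ENNReal.ofReal (|b.1 - a.1| / (n + 1)) * μ (Prod.mk t ⁻¹' K) ≤
        ∫⁻ u, μ (Prod.mk u ⁻¹' K) := fun c hc hwidth =>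
    calc _ ≤ ENNReal.ofReal (|t - c.1| / (n + 1)) * μ (Prod.mk t ⁻¹' K) := by gcongr
      _ ≤ _ := (hK.ofReal_mul_addHaar_slice_le_setLIntegral μ hc t).trans
          (setLIntegral_le_lintegral _ _)
  rcases le_or_gt t a.1 with hta | hat
  · exact hcone b hb (by rw [abs_of_nonneg (by linarith), abs_of_nonpos (by linarith)]; linarith)
  rcases le_or_gt b.1 t with hbt | htb
  · exact hcone a ha (by rw [abs_of_nonneg (by linarith), abs_of_nonneg (by linarith)]; linarith)
  have hleft := hK.ofReal_mul_addHaar_slice_le_setLIntegral μ ha t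
  have hright := hK.ofReal_mul_addHaar_slice_le_setLIntegral μ hb t
  rw [uIoc_of_ge hat.le, abs_of_pos (by linarith)] at hleft
  rw [uIoc_of_le htb.le, abs_of_neg (by linarith)] at hright
  calc ENNReal.ofReal (|b.1 - a.1| / (n + 1)) * μ (Prod.mk t ⁻¹' K)
      = ENNReal.ofReal ((t - a.1) / (n + 1)) * μ (Prod.mk t ⁻¹' K) +
          ENNReal.ofReal (-(t - b.1) / (n + 1)) * μ (Prod.mk t ⁻¹' K) := by
        rw [← add_mul, ← ENNReal.ofReal_add (by bound) (by bound), abs_of_nonneg (by linarith)]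
        ring_nf
    _ ≤ ∫⁻ u in Ioc a.1 t ∪ Ioc t b.1, μ (Prod.mk u ⁻¹' K) := by
        rw [lintegral_union measurableSet_Ioc (Ioc_disjoint_Ioc_of_le le_rfl)]
        exact add_le_add hleft hright
    _ ≤ ∫⁻ u, μ (Prod.mk u ⁻¹' K) := setLIntegral_le_lintegral _ _

end Convex

theorem slice_volume_bound_general (m : ℕ) (K : Set (ℝ × (Fin m → ℝ)))
    (hKc : Convex ℝ K) (hKs : K = -K)
    (r' : ℝ) (hr' : 0 < r')
    (hx : ∃ x ∈ K, |x.1| = r') (t : ℝ) :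
    (volume {y : Fin m → ℝ | (t, y) ∈ K}).toReal / (volume K).toReal ≤
      ((m : ℝ) + 1) / (2 * r') := by
  obtain ⟨x, hxK, hxr⟩ := hx
  have hnegx : -x ∈ K := by rw [hKs]; exact neg_mem_neg.2 hxK
  have hwidth : |x.1 - (-x).1| = 2 * r' := by
    rw [Prod.fst_neg, sub_neg_eq_add, ← two_mul, abs_mul, abs_two, hxr]
  have hbound := (hKc.ofReal_mul_addHaar_slice_le_lintegral volume hnegx hxK t).trans
    (Measure.lintegral_measure_preimage_mk_le_prod volume volume K)
  rw [hwidth, Module.finrank_fin_fun] at hbound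
  have := ENNReal.toReal_div_toReal_le_inv_of_ofReal_mul_le (by positivity) hbound
  rwa [inv_div] at this

theorem slice_volume_bound (m : ℕ) (K : Set (ℝ × (Fin m → ℝ)))
    (hK : IsCompact K) (hKc : Convex ℝ K) (hKs : K = -K)
    (hKv : 0 < volume K) (r' : ℝ) (hr' : 0 < r')
    (hx : ∃ x ∈ K, |x.1| = r') (t : ℝ) :
    (volume {y : Fin m → ℝ | (t, y) ∈ K}).toReal / (volume K).toReal ≤
      ((m : ℝ) + 1) / (2 * r') :=
  slice_volume_bound_general m K hKc hKs r' hr' hx t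
end

section
/- Let R be a subring of a number field K that is finitely generated and free as a ℤ-module and spans K over ℚ (an order in K). Then the unit group R× is finite if and only if r + s = 1, where r is the number of real embeddings of K and s the number of conjugate pairs of complex embeddings; equivalently, R× is finite if and only if K = ℚ or K is imaginary quadratic. -/
/-!
By Dirichlet's unit theorem `(𝓞 K)ˣ` is, modulo its finite torsion, free of rank `r + s - 1`, so
it is finite iff `r + s = 1`; with `r + 2 s = [K : ℚ]` this means `[K : ℚ] = 1`, or `[K : ℚ] = 2`
and `r = 0`. An order `R` has finite unit group iff `𝓞 K` does: `R ⊆ 𝓞 K` by integrality, and as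
`R` spans `K` over `ℚ` some `m ≠ 0` has `m 𝓞 K ⊆ R`. The units of `𝓞 K` congruent to `1` modulo
`m` then lie in `Rˣ`, and they form the kernel of the map to the finite group `(𝓞 K ⧸ m)ˣ`, a
subgroup of finite index.
-/

open NumberField

theorem Submodule.exists_zsmul_mem_of_mem_span_rat {V : Type*} [AddCommGroup V] [Module ℚ V]
    {N : Submodule ℤ V} {x : V} (hx : x ∈ span ℚ (N : Set V)) :
    ∃ m : ℤ, m ≠ 0 ∧ m • x ∈ N := by
  have := isLocalizedModule_id (nonZeroDivisors ℤ) V ℚ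
  have hx' : x ∈ localized' ℚ (nonZeroDivisors ℤ) (LinearMap.id : V →ₗ[ℤ] V) N := by
    rwa [localized'_eq_span, LinearMap.id_coe, Set.image_id]
  obtain ⟨n, hn, s, rfl⟩ := hx'
  refine ⟨s, nonZeroDivisors.coe_ne_zero s, ?_⟩
  rwa [← Submonoid.smul_def, IsLocalizedModule.mk'_cancel']

theorem Submodule.exists_zsmul_mem_of_fg_of_le_span_rat {V : Type*} [AddCommGroup V]
    [Module ℚ V] {N P : Submodule ℤ V} (hP : P.FG) (hle : (P : Set V) ⊆ span ℚ (N : Set V)) :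
    ∃ m : ℤ, m ≠ 0 ∧ ∀ x ∈ P, m • x ∈ N := by
  have : Module.Finite ℤ (P.map N.mkQ) := Module.Finite.iff_fg.mpr (hP.map _)
  have htors : Module.IsTorsion ℤ (P.map N.mkQ) := by
    rintro ⟨_, x, hx, rfl⟩
    obtain ⟨m, hm, hmx⟩ := exists_zsmul_mem_of_mem_span_rat (hle hx)
    refine ⟨⟨m, mem_nonZeroDivisors_of_ne_zero hm⟩, Subtype.ext ?_⟩
    simpa [Submonoid.smul_def, ← Quotient.mk_smul, Quotient.mk_eq_zero] using hmx
  obtain ⟨m, hann, hm⟩ := annihilator_top_inter_nonZeroDivisors htors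
  refine ⟨m, nonZeroDivisors.ne_zero hm, fun x hx => ?_⟩
  have := congrArg Subtype.val (mem_annihilator.mp hann ⟨N.mkQ x, mem_map_of_mem hx⟩ mem_top)
  simpa [← Quotient.mk_smul, Quotient.mk_eq_zero] using this

theorem Module.finite_iff_finrank_int_eq_zero (M : Type*) [AddCommGroup M] [Module.Finite ℤ M] :
    Finite M ↔ finrank ℤ M = 0 := by
  rw [finrank_eq_zero_iff_isTorsion, ← isAddTorsion_iff_isTorsion_int]
  refine ⟨fun _ x => isOfFinAddOrder_of_finite x, fun h => ?_⟩
  exact finite_of_fg_torsion M (isAddTorsion_iff_isTorsion_int.mp h)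

theorem NumberField.Units.finite_iff_rank_eq_zero (K : Type*) [Field K] [NumberField K] :
    Finite (𝓞 K)ˣ ↔ Units.rank K = 0 := by
  rw [← Units.finrank_eq, ← Module.finite_iff_finrank_int_eq_zero]
  exact (Equiv.finite_iff Additive.ofMul).symm

theorem Units.mem_range_map_of_mem_range {M N : Type*} [Monoid M] [Monoid N] {f : M →* N}
    (hf : Function.Injective f) {u : Nˣ} (hu : (u : N) ∈ Set.range f)
    (hu' : ((u⁻¹ : Nˣ) : N) ∈ Set.range f) : u ∈ (Units.map f).range := by
  obtain ⟨a, ha⟩ := hu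
  obtain ⟨b, hb⟩ := hu'
  have hab : a * b = 1 := hf (by simp [ha, hb])
  have hba : b * a = 1 := hf (by simp [ha, hb])
  exact ⟨⟨a, b, hab, hba⟩, Units.ext ha⟩

theorem finite_units_iff_of_ideal_le_range {A B : Type*} [Ring A] [CommRing B]
    (f : A →+* B) (hf : Function.Injective f) (I : Ideal B) [Finite (B ⧸ I)]
    (hI : (I : Set B) ⊆ f.range) : Finite Aˣ ↔ Finite Bˣ := by
  refine ⟨fun _ => ?_, fun _ => Finite.of_injective _ (Units.map_injective hf)⟩
  let φ : Bˣ →* (B ⧸ I)ˣ := Units.map (Ideal.Quotient.mk I : B →* B ⧸ I)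
  have hval_mem : ∀ u ∈ φ.ker, (u : B) ∈ f.range := fun u hu => by
    have hsub : (u : B) - 1 ∈ I := by
      rw [← Ideal.Quotient.eq, map_one]
      simpa [φ, Units.ext_iff] using hu
    simpa using f.range.add_mem f.range.one_mem (hI hsub)
  have hker : φ.ker ≤ (Units.map (f : A →* B)).range := fun u hu =>
    Units.mem_range_map_of_mem_range hf (hval_mem u hu) (hval_mem _ (inv_mem hu))
  have : Finite (Units.map (f : A →* B)).range := Set.finite_range _ |>.to_subtype
  have : Finite φ.ker := Finite.Set.subset _ hker
  exact φ.finite_iff_finite_ker_range.mpr ⟨inferInstance, inferInstance⟩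

namespace NumberField

variable {K : Type*} [Field K] [NumberField K]

theorem exists_zsmul_mem_of_span_rat_eq_top {R : Subring K}
    (hspan : Submodule.span ℚ (R : Set K) = ⊤) :
    ∃ m : ℤ, m ≠ 0 ∧ ∀ x : 𝓞 K, m • (x : K) ∈ R := by
  obtain ⟨m, hm, hmR⟩ := Submodule.exists_zsmul_mem_of_fg_of_le_span_rat
    (N := R.toAddSubgroup.toIntSubmodule)
    (Submodule.fg_range ((Algebra.linearMap (𝓞 K) K).restrictScalars ℤ)) (by simp [hspan])
  exact ⟨m, hm, fun x => hmR _ ⟨x, rfl⟩⟩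

theorem finite_units_iff_of_span_rat_eq_top (R : Subring K) [Module.Finite ℤ R]
    (hspan : Submodule.span ℚ (R : Set K) = ⊤) : Finite Rˣ ↔ Finite (𝓞 K)ˣ := by
  obtain ⟨m, hm, hmR⟩ := exists_zsmul_mem_of_span_rat_eq_top hspan
  let f : R →+* 𝓞 K := IsIntegralClosure.lift ℤ (𝓞 K) K (S := R)
  have hf : ∀ x, (f x : K) = x := IsIntegralClosure.algebraMap_lift ℤ (𝓞 K) K
  have : Finite (𝓞 K ⧸ Ideal.span {(m : 𝓞 K)}) :=
    Ideal.finiteQuotientOfFreeOfNeBot _ (by simpa using hm)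
  refine finite_units_iff_of_ideal_le_range f (fun x y h => ?_) (Ideal.span {(m : 𝓞 K)})
    fun y hy => ?_
  · simpa [hf] using congrArg ((↑) : 𝓞 K → K) h
  · obtain ⟨z, rfl⟩ := Ideal.mem_span_singleton'.mp hy
    exact ⟨⟨m • (z : K), hmR z⟩, by ext; simp [hf, mul_comm]⟩

end NumberField

theorem order_units_finite_iff_general (K : Type*) [Field K] [NumberField K] (R : Subring K)
    (hfg : Module.Finite ℤ R)
    (hspan : Submodule.span ℚ (R : Set K) = ⊤) :
    (Finite Rˣ ↔
      Nat.card {w : NumberField.InfinitePlace K // w.IsReal} +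
        Nat.card {w : NumberField.InfinitePlace K // w.IsComplex} = 1) ∧
    (Finite Rˣ ↔
      Module.finrank ℚ K = 1 ∨
        (Module.finrank ℚ K = 2 ∧
          Nat.card {w : NumberField.InfinitePlace K // w.IsReal} = 0)) := by
  have hunits : Finite Rˣ ↔ Units.rank K = 0 :=
    (finite_units_iff_of_span_rat_eq_top R hspan).trans (Units.finite_iff_rank_eq_zero K)
  have hplaces := InfinitePlace.card_eq_nrRealPlaces_add_nrComplexPlaces K
  have hdegree := InfinitePlace.card_add_two_mul_card_eq_rank K
  have hpos : 0 < Fintype.card (InfinitePlace K) := Fintype.card_pos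
  simp only [InfinitePlace.nrRealPlaces, InfinitePlace.nrComplexPlaces,
    Fintype.card_eq_nat_card] at hplaces hdegree hpos
  rw [hunits, Units.rank, Fintype.card_eq_nat_card]
  omega

theorem order_units_finite_iff (K : Type*) [Field K] [NumberField K] (R : Subring K)
    (hfg : Module.Finite ℤ R) (hfree : Module.Free ℤ R)
    (hspan : Submodule.span ℚ (R : Set K) = ⊤) :
    (Finite Rˣ ↔
      Nat.card {w : NumberField.InfinitePlace K // w.IsReal} +
        Nat.card {w : NumberField.InfinitePlace K // w.IsComplex} = 1) ∧
    (Finite Rˣ ↔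
      Module.finrank ℚ K = 1 ∨
        (Module.finrank ℚ K = 2 ∧
          Nat.card {w : NumberField.InfinitePlace K // w.IsReal} = 0)) :=
  order_units_finite_iff_general K R hfg hspan
end
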